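/- (Lemma 1, standardized form.) Let (Ω, P) be a probability space, let Z be a finite nonempty index set of cardinality M, let α ∈ (0,1), and for each positive integer n set β_n = 2·log(π²·n²·M/(6α)). Let a ∈ ℝ be a fixed contour level. For each z ∈ Z let Y_z : Ω → ℝ be a random variable, and for each n ≥ 1 and z ∈ Z let μ_{n,z} ∈ ℝ and σ_{n,z} > 0 be constants such that the standardized variable (Y_z − μ_{n,z})/σ_{n,z} has the standard normal distribution N(0,1). Define h_z = |Y_z − a| and μ_h(n,z) = |μ_{n,z} − a|. Then P( for all n ≥ 1 and all z ∈ Z, |h_z − μ_h(n,z)| ≤ √β_n · σ_{n,z} ) ≥ 1 − α. -/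

import Mathlib

open MeasureTheory ProbabilityTheory Real Set
open scoped ENNReal

lemma gauss_half_tail (s : ℝ) (hs : 0 ≤ s) :
    gaussianReal 0 1 (Set.Ioi s) ≤ ENNReal.ofReal (Real.exp (-(s^2)/2) / 2) := by
  rw [gaussianReal_apply_eq_integral 0 one_ne_zero]
  apply ENNReal.ofReal_le_ofReal
  have hint2 : Integrable (fun x : ℝ => Real.exp (-(1/2) * (x - s)^2)) := by
    have h := integrable_exp_neg_mul_sq (by norm_num : (0:ℝ) < 1/2)
    exact ((measurePreserving_sub_right volume s).integrable_comp_emb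
      (MeasurableEquiv.subRight s).measurableEmbedding).mpr h
  have hint2' : Integrable (fun x : ℝ =>
      (Real.sqrt (2 * Real.pi))⁻¹ * (Real.exp (-(s^2)/2) * Real.exp (-(1/2) * (x - s)^2))) :=
    (hint2.const_mul _).const_mul _
  have hmono : ∫ x in Set.Ioi s, gaussianPDFReal 0 1 x ≤
      ∫ x in Set.Ioi s,
        (Real.sqrt (2 * Real.pi))⁻¹ * (Real.exp (-(s^2)/2) * Real.exp (-(1/2) * (x - s)^2)) := by
    apply setIntegral_mono_on (integrable_gaussianPDFReal 0 1).integrableOn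
      hint2'.integrableOn measurableSet_Ioi
    intro x hx
    have hpdf : gaussianPDFReal 0 1 x = (Real.sqrt (2 * Real.pi))⁻¹ * Real.exp (-x^2/2) := by
      simp [gaussianPDFReal]
    rw [hpdf, ← Real.exp_add]
    have hx' : s ≤ x := le_of_lt hx
    exact mul_le_mul_of_nonneg_left (Real.exp_le_exp.mpr (by nlinarith))
      (inv_nonneg.mpr (Real.sqrt_nonneg _))
  refine hmono.trans ?_
  rw [integral_const_mul, integral_const_mul]
  have hshift : ∫ x in Set.Ioi s, Real.exp (-(1/2) * (x - s)^2)
      = ∫ x in Set.Ioi (0:ℝ), Real.exp (-(1/2) * x^2) := by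
    have hmp : MeasurePreserving (fun x : ℝ => x + s) volume volume :=
      measurePreserving_add_right volume s
    have := hmp.setIntegral_preimage_emb (MeasurableEquiv.addRight s).measurableEmbedding
      (fun x => Real.exp (-(1/2) * (x - s)^2)) (Set.Ioi s)
    have hpre : (fun x : ℝ => x + s) ⁻¹' Set.Ioi s = Set.Ioi 0 := by
      ext x
      simp only [Set.mem_preimage, Set.mem_Ioi]
      constructor <;> intro h <;> linarith
    simp only [add_sub_cancel_right, hpre] at this
    rw [← this]
  rw [hshift, integral_gaussian_Ioi]
  have h2π : (0:ℝ) < Real.sqrt (2 * Real.pi) := Real.sqrt_pos.mpr (by positivity)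
  have heq : Real.sqrt (Real.pi / (1/2)) = Real.sqrt (2 * Real.pi) := by norm_num [mul_comm]
  rw [heq]
  apply le_of_eq
  field_simp

lemma gauss_tail (s : ℝ) (hs : 0 ≤ s) :
    gaussianReal 0 1 {x : ℝ | s < |x|} ≤ ENNReal.ofReal (Real.exp (-(s^2)/2)) := by
  have hA : {x : ℝ | s < |x|} = Set.Iio (-s) ∪ Set.Ioi s := by
    ext x
    simp only [Set.mem_setOf_eq, Set.mem_union, Set.mem_Iio, Set.mem_Ioi, lt_abs]
    constructor
    · rintro (h | h)
      · right; exact h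
      · left; linarith
    · rintro (h | h)
      · right; linarith
      · left; exact h
  have hdisj : Disjoint (Set.Iio (-s)) (Set.Ioi s) :=
    (Set.Iio_disjoint_Ici (by linarith)).mono_right Set.Ioi_subset_Ici_self
  have hsymm : gaussianReal 0 1 (Set.Iio (-s)) = gaussianReal 0 1 (Set.Ioi s) := by
    have hmap : (gaussianReal 0 1).map (fun x : ℝ => (-1 : ℝ) * x) = gaussianReal 0 1 := by
      have := gaussianReal_map_const_mul (μ := 0) (v := 1) (-1 : ℝ)
      simpa using this
    calc gaussianReal 0 1 (Set.Iio (-s))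
        = (gaussianReal 0 1).map (fun x : ℝ => (-1 : ℝ) * x) (Set.Iio (-s)) := by rw [hmap]
      _ = gaussianReal 0 1 ((fun x : ℝ => (-1 : ℝ) * x) ⁻¹' Set.Iio (-s)) :=
          Measure.map_apply (measurable_id.const_mul _) measurableSet_Iio
      _ = gaussianReal 0 1 (Set.Ioi s) := by
          congr 1
          ext x
          simp only [Set.mem_preimage, Set.mem_Iio, Set.mem_Ioi]
          constructor <;> intro h <;> linarith
  rw [hA, measure_union hdisj measurableSet_Ioi, hsymm]
  calc gaussianReal 0 1 (Set.Ioi s) + gaussianReal 0 1 (Set.Ioi s)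
      ≤ ENNReal.ofReal (Real.exp (-(s^2)/2) / 2) + ENNReal.ofReal (Real.exp (-(s^2)/2) / 2) := by
        gcongr <;> exact gauss_half_tail s hs
    _ = ENNReal.ofReal (Real.exp (-(s^2)/2)) := by
        rw [← ENNReal.ofReal_add (by positivity) (by positivity)]
        norm_num

/-- Lemma 1 (standardized form): if (Y_z − μ_{n,z})/σ_{n,z} ~ N(0,1), then with
    h_z = |Y_z − a| and μ_h(n,z) = |μ_{n,z} − a|,
    P(∀ n ≥ 1, ∀ z, |h_z − μ_h(n,z)| ≤ √β_n · σ_{n,z}) ≥ 1 − α. -/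
theorem lemma_one_contour_confidence {Ω : Type*} [MeasurableSpace Ω]
    (P : Measure Ω) [IsProbabilityMeasure P]
    {Z : Type*} [Fintype Z] [Nonempty Z] (M : ℕ) (hM : M = Fintype.card Z)
    (α : ℝ) (hα0 : 0 < α) (hα1 : α < 1)
    (β : ℕ → ℝ)
    (hβ : ∀ n : ℕ, β n = 2 * Real.log (Real.pi ^ 2 * (n : ℝ) ^ 2 * (M : ℝ) / (6 * α)))
    (a : ℝ) (Y : Z → Ω → ℝ) (hYm : ∀ z, Measurable (Y z))
    (μc : ℕ → Z → ℝ) (σc : ℕ → Z → ℝ) (hσ : ∀ n z, 0 < σc n z)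
    (hstd : ∀ n z, P.map (fun ω => (Y z ω - μc n z) / σc n z) = gaussianReal 0 1) :
    ENNReal.ofReal (1 - α) ≤
      P {ω | ∀ n : ℕ, 1 ≤ n → ∀ z : Z,
          |(|Y z ω - a|) - (|μc n z - a|)| ≤ Real.sqrt (β n) * σc n z} := by
  classical
  have hM1 : 1 ≤ M := by rw [hM]; exact Fintype.card_pos
  have hMpos : (0:ℝ) < M := by exact_mod_cast Nat.lt_of_lt_of_le Nat.zero_lt_one hM1
  set S := {ω | ∀ n : ℕ, 1 ≤ n → ∀ z : Z,
      |(|Y z ω - a|) - (|μc n z - a|)| ≤ Real.sqrt (β n) * σc n z} with hSdef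
  -- measurability of S
  have hSm : MeasurableSet S := by
    rw [hSdef, Set.setOf_forall]
    refine MeasurableSet.iInter fun n => ?_
    have : {ω | 1 ≤ n → ∀ z : Z,
        |(|Y z ω - a|) - (|μc n z - a|)| ≤ Real.sqrt (β n) * σc n z}
        = ⋂ (_ : 1 ≤ n), ⋂ z : Z, {ω |
        |(|Y z ω - a|) - (|μc n z - a|)| ≤ Real.sqrt (β n) * σc n z} := by
      ext ω; simp [Set.mem_iInter]
    rw [this]
    refine MeasurableSet.iInter fun _ => MeasurableSet.iInter fun z => ?_
    exact measurableSet_le ((((hYm z).sub_const a).abs.sub_const _).abs) measurable_const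
  -- bad events
  set C : ℕ → Z → Set Ω := fun n z =>
    if 1 ≤ n then {ω | Real.sqrt (β n) * σc n z < |Y z ω - μc n z|} else ∅ with hCdef
  have hsub : Sᶜ ⊆ ⋃ n, ⋃ z, C n z := by
    intro ω hω
    simp only [hSdef, Set.mem_compl_iff, Set.mem_setOf_eq, not_forall] at hω
    obtain ⟨n, hn, z, hz⟩ := hω
    refine Set.mem_iUnion.mpr ⟨n, Set.mem_iUnion.mpr ⟨z, ?_⟩⟩
    rw [hCdef]
    simp only [hn, if_true, Set.mem_setOf_eq]
    push_neg at hz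
    calc Real.sqrt (β n) * σc n z < |(|Y z ω - a|) - (|μc n z - a|)| := hz
      _ ≤ |(Y z ω - a) - (μc n z - a)| := abs_abs_sub_abs_le_abs_sub _ _
      _ = |Y z ω - μc n z| := by ring_nf
  -- positivity of β n for n ≥ 1
  have hβpos : ∀ n : ℕ, 1 ≤ n → 0 < β n := by
    intro n hn
    rw [hβ n]
    have hn1 : (1:ℝ) ≤ (n:ℝ) := by exact_mod_cast hn
    have harg : 1 < Real.pi ^ 2 * (n:ℝ) ^ 2 * (M:ℝ) / (6 * α) := by
      rw [lt_div_iff₀ (by positivity)]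
      have hpi : (3:ℝ) < Real.pi := Real.pi_gt_three
      have hM1' : (1:ℝ) ≤ (M:ℝ) := by exact_mod_cast hM1
      have h9 : (9:ℝ) * 1 * 1 ≤ Real.pi ^ 2 * (n:ℝ) ^ 2 * (M:ℝ) := by
        gcongr
        · nlinarith
        · nlinarith
      nlinarith
    have := Real.log_pos harg
    linarith
  -- bound on the measure of each bad event
  have hbad : ∀ n : ℕ, 1 ≤ n → ∀ z : Z,
      P (C n z) ≤ ENNReal.ofReal (6 * α / (Real.pi ^ 2 * (n:ℝ) ^ 2 * (M:ℝ))) := by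
    intro n hn z
    have hβn := hβpos n hn
    have hσz := hσ n z
    have hCeq : C n z = (fun ω => (Y z ω - μc n z) / σc n z) ⁻¹'
        {t : ℝ | Real.sqrt (β n) < |t|} := by
      rw [hCdef]
      simp only [hn, if_true]
      ext ω
      simp only [Set.mem_setOf_eq, Set.mem_preimage, abs_div, abs_of_pos hσz,
        lt_div_iff₀ hσz]
    have hfm : Measurable (fun ω => (Y z ω - μc n z) / σc n z) :=
      ((hYm z).sub_const _).div_const _
    have hTm : MeasurableSet {t : ℝ | Real.sqrt (β n) < |t|} :=
      (isOpen_lt continuous_const continuous_abs).measurableSet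
    rw [hCeq, ← Measure.map_apply hfm hTm, hstd n z]
    have htail := gauss_tail (Real.sqrt (β n)) (Real.sqrt_nonneg _)
    rw [Real.sq_sqrt (le_of_lt hβn)] at htail
    refine htail.trans (le_of_eq ?_)
    congr 1
    rw [hβ n]
    have harg : (0:ℝ) < Real.pi ^ 2 * (n:ℝ) ^ 2 * (M:ℝ) / (6 * α) := by
      have hn1 : (1:ℝ) ≤ (n:ℝ) := by exact_mod_cast hn
      positivity
    rw [show -(2 * Real.log (Real.pi ^ 2 * (n:ℝ) ^ 2 * (M:ℝ) / (6 * α))) / 2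
        = -Real.log (Real.pi ^ 2 * (n:ℝ) ^ 2 * (M:ℝ) / (6 * α)) by ring]
    rw [Real.exp_neg, Real.exp_log harg, inv_div]
  -- union bound
  have hcompl : P Sᶜ ≤ ENNReal.ofReal α := by
    have h1 : P Sᶜ ≤ ∑' n : ℕ, ∑' z : Z, P (C n z) :=
      (measure_mono hsub).trans ((measure_iUnion_le _).trans
        (ENNReal.tsum_le_tsum fun n => measure_iUnion_le _))
    have h2 : ∀ n : ℕ, ∑' z : Z, P (C n z) ≤
        ENNReal.ofReal (6 * α / Real.pi ^ 2 * (1 / (n:ℝ) ^ 2)) := by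
      intro n
      by_cases hn : 1 ≤ n
      · calc ∑' z : Z, P (C n z)
            ≤ ∑' _ : Z, ENNReal.ofReal (6 * α / (Real.pi ^ 2 * (n:ℝ) ^ 2 * (M:ℝ))) :=
              ENNReal.tsum_le_tsum fun z => hbad n hn z
          _ = (Fintype.card Z : ℕ) • ENNReal.ofReal (6 * α / (Real.pi ^ 2 * (n:ℝ) ^ 2 * (M:ℝ))) := by
              rw [tsum_fintype]; simp [Finset.sum_const]
          _ = ENNReal.ofReal ((M:ℝ) * (6 * α / (Real.pi ^ 2 * (n:ℝ) ^ 2 * (M:ℝ)))) := by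
              rw [nsmul_eq_mul, ← hM, ← ENNReal.ofReal_natCast M,
                ← ENNReal.ofReal_mul (by positivity)]
          _ = ENNReal.ofReal (6 * α / Real.pi ^ 2 * (1 / (n:ℝ) ^ 2)) := by
              congr 1
              have hn1 : (1:ℝ) ≤ (n:ℝ) := by exact_mod_cast hn
              field_simp
      · have hn0 : n = 0 := by omega
        subst hn0
        have : ∀ z : Z, C 0 z = ∅ := by intro z; rw [hCdef]; simp
        simp [this]
    have h3 : ∑' n : ℕ, ENNReal.ofReal (6 * α / Real.pi ^ 2 * (1 / (n:ℝ) ^ 2))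
        = ENNReal.ofReal α := by
      have hsum : HasSum (fun n : ℕ => 6 * α / Real.pi ^ 2 * (1 / (n:ℝ) ^ 2))
          (6 * α / Real.pi ^ 2 * (Real.pi ^ 2 / 6)) := hasSum_zeta_two.mul_left _
      have hval : 6 * α / Real.pi ^ 2 * (Real.pi ^ 2 / 6) = α := by
        have hpi : Real.pi ≠ 0 := Real.pi_ne_zero
        field_simp
      rw [← ENNReal.ofReal_tsum_of_nonneg (fun n => by positivity) hsum.summable,
        hsum.tsum_eq, hval]
    calc P Sᶜ ≤ ∑' n : ℕ, ∑' z : Z, P (C n z) := h1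
      _ ≤ ∑' n : ℕ, ENNReal.ofReal (6 * α / Real.pi ^ 2 * (1 / (n:ℝ) ^ 2)) :=
          ENNReal.tsum_le_tsum h2
      _ = ENNReal.ofReal α := h3
  -- conclude
  have hadd : P S + P Sᶜ = 1 := by
    rw [measure_add_measure_compl hSm, measure_univ]
  have h1' : (1:ℝ≥0∞) - P Sᶜ ≤ P S := by
    rw [tsub_le_iff_right]
    rw [hadd]
  refine le_trans ?_ h1'
  have : ENNReal.ofReal (1 - α) = 1 - ENNReal.ofReal α := by
    rw [← ENNReal.ofReal_one, ← ENNReal.ofReal_sub _ (le_of_lt hα0)]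
  rw [this]
  exact tsub_le_tsub_left hcompl 1
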